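/- Assume the Y structure with P(C=1) > 0 and P(C=0) > 0, and let d ∈ {0,1} with P(D=d) > 0. Then Y-bias on the covariance scale is a linear combination of the embedded V-biases: cov(X, Y | D=d) = [ ( p_{d|1} − p_{d|0} ) / P(D=d)^2 ] · [ p_{d|1} · P(C=1)^2 · cov(X, Y | C=1) − p_{d|0} · P(C=0)^2 · cov(X, Y | C=0) ]. -/

import Mathlib

/-!
Write `N(m) = m({X=1} ∩ {Y=1}) · m(Ω) - m({X=1}) · m({Y=1})` for a set function `m`, so that
`N(P(· ∩ t)) = P(t)² · cov(X, Y | t)`; `N` is a quadratic form in `m`. Because `D` depends on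
`(X, Y)` only through `C`, on the events involved `P(· ∩ {D=d}) = p_{d|1} m₁ + p_{d|0} m₀` with
`m_γ = P(· ∩ {C=γ})`, while `m₀ + m₁ = P` has `N(P) = 0` since `X` and `Y` are independent.
Expanding `N(p_{d|1} m₁ + p_{d|0} m₀)` and eliminating the cross term of `m₀, m₁` through `N(P) = 0`
leaves `(p_{d|1} - p_{d|0}) (p_{d|1} N(m₁) - p_{d|0} N(m₀))`.
-/

open MeasureTheory ProbabilityTheory

variable {Ω : Type*} [MeasurableSpace Ω]

/-- The event that the random variable `X` takes the value `x`. -/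
def ev (X : Ω → ℝ) (x : ℝ) : Set Ω := {ω | X ω = x}

/-- The probability of an event, as a real number. -/
noncomputable def pr (P : Measure Ω) (s : Set Ω) : ℝ := (P s).toReal

/-- The conditional probability `P(s | t)`, as a real number. -/
noncomputable def cpr (P : Measure Ω) (s t : Set Ω) : ℝ := pr (P[|t]) s

/-- The covariance of two real-valued random variables. -/
noncomputable def rcov (P : Measure Ω) (X Y : Ω → ℝ) : ℝ :=
  ∫ ω, (X ω - ∫ ω', X ω' ∂P) * (Y ω - ∫ ω', Y ω' ∂P) ∂P

/-- The conditional covariance of two real-valued random variables given an event. -/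
noncomputable def covCond (P : Measure Ω) (X Y : Ω → ℝ) (t : Set Ω) : ℝ :=
  rcov (P[|t]) X Y

/-- The conditional variance of a real-valued random variable given an event. -/
noncomputable def varCond (P : Measure Ω) (X : Ω → ℝ) (t : Set Ω) : ℝ :=
  covCond P X X t

/-- A measurable `{0,1}`-valued random variable. -/
def IsBin (X : Ω → ℝ) : Prop := Measurable X ∧ ∀ ω, X ω = 0 ∨ X ω = 1

open Set

lemma pr_eq_measureReal (P : Measure Ω) (s : Set Ω) : pr P s = P.real s := rfl

lemma measureReal_cond (P : Measure Ω) {t : Set Ω} (ht : MeasurableSet t) (s : Set Ω) :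
    P[|t].real s = P.real (s ∩ t) / P.real t := by
  rw [measureReal_def, cond_apply ht, ENNReal.toReal_mul, ENNReal.toReal_inv, inter_comm,
    inv_mul_eq_div, measureReal_def, measureReal_def]

lemma cpr_eq_div (P : Measure Ω) {t : Set Ω} (ht : MeasurableSet t) (s : Set Ω) :
    cpr P s t = P.real (s ∩ t) / P.real t :=
  measureReal_cond P ht s

lemma covariance_indicator_one (μ : Measure Ω) [IsProbabilityMeasure μ] {s t : Set Ω}
    (hs : MeasurableSet s) (ht : MeasurableSet t) :
    cov[s.indicator 1, t.indicator 1; μ] = μ.real (s ∩ t) - μ.real s * μ.real t := by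
  have memLp_of {u : Set Ω} (hu : MeasurableSet u) : MemLp (u.indicator 1) 2 μ :=
    memLp_indicator_const 2 hu (1 : ℝ) (.inr (measure_ne_top μ u))
  rw [covariance_eq_sub (memLp_of hs) (memLp_of ht), ← inter_indicator_one,
    integral_indicator_one (hs.inter ht), integral_indicator_one hs, integral_indicator_one ht]

/-- For `m = P(· ∩ t)` this is `P(t)² · cov(1_A, 1_B | t)`. -/
def covNumerator {α : Type*} (m : Set α → ℝ) (A B : Set α) : ℝ := m (A ∩ B) * m univ - m A * m B

lemma covNumerator_mixture {α : Type*} {m m₀ m₁ n : Set α → ℝ} {A B : Set α} {r₀ r₁ : ℝ}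
    (hm : ∀ s ∈ ({A ∩ B, A, B, univ} : Set (Set α)), m s = r₁ * m₁ s + r₀ * m₀ s)
    (hn : ∀ s, n s = m₀ s + m₁ s) (hn₀ : covNumerator n A B = 0) :
    covNumerator m A B = (r₁ - r₀) * (r₁ * covNumerator m₁ A B - r₀ * covNumerator m₀ A B) := by
  simp only [mem_insert_iff, mem_singleton_iff, forall_eq_or_imp, forall_eq] at hm
  obtain ⟨hAB, hA, hB, hU⟩ := hm
  simp only [covNumerator, hn] at hn₀ ⊢
  rw [hAB, hA, hB, hU]
  linear_combination (r₀ * r₁) * hn₀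

namespace IsBin

variable {X Y Z : Ω → ℝ}

lemma measurableSet_ev (hX : IsBin X) (x : ℝ) : MeasurableSet (ev X x) :=
  hX.1 (measurableSet_singleton x)

lemma compl_ev_zero (hX : IsBin X) : (ev X 0)ᶜ = ev X 1 := by
  ext ω
  rcases hX.2 ω with h | h <;> simp [ev, h]

lemma eq_indicator (hX : IsBin X) : X = (ev X 1).indicator 1 := by
  funext ω
  rcases hX.2 ω with h | h <;> simp [ev, h]

lemma measureReal_eq_add (μ : Measure Ω) [IsFiniteMeasure μ] (hZ : IsBin Z) (s : Set Ω) :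
    μ.real s = μ.real (s ∩ ev Z 0) + μ.real (s ∩ ev Z 1) := by
  rw [← hZ.compl_ev_zero, ← sdiff_eq, measureReal_inter_add_sdiff (hZ.measurableSet_ev 0)]

lemma measureReal_inter_eq_add (μ : Measure Ω) [IsFiniteMeasure μ] (hZ : IsBin Z)
    (s v : Set Ω) :
    μ.real (s ∩ v) = μ.real (s ∩ ev Z 0 ∩ v) + μ.real (s ∩ ev Z 1 ∩ v) := by
  rw [hZ.measureReal_eq_add μ (s ∩ v), inter_right_comm, inter_right_comm s v]

lemma measureReal_inter_inter_eq_mul (μ : Measure Ω) [IsFiniteMeasure μ] (hZ : IsBin Z)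
    {s u t : Set Ω} {r : ℝ}
    (h : ∀ z : ℝ, (z = 0 ∨ z = 1) → μ.real (s ∩ ev Z z ∩ u ∩ t) = μ.real (s ∩ ev Z z ∩ u) * r) :
    μ.real (s ∩ u ∩ t) = μ.real (s ∩ u) * r := by
  rw [inter_assoc, hZ.measureReal_inter_eq_add μ s (u ∩ t), hZ.measureReal_inter_eq_add μ s u,
    ← inter_assoc, ← inter_assoc, h 0 (.inl rfl), h 1 (.inr rfl)]
  ring

lemma cpr_ev_zero_add_cpr_ev_one (P : Measure Ω) [IsFiniteMeasure P] (hX : IsBin X)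
    {t : Set Ω} (ht : P.real t ≠ 0) : cpr P (ev X 0) t + cpr P (ev X 1) t = 1 := by
  have := cond_isProbabilityMeasure ((measureReal_ne_zero_iff).mp ht)
  simpa [cpr, pr_eq_measureReal] using (hX.measureReal_eq_add (P[|t]) univ).symm

end IsBin

lemma covCond_eq_covNumerator_div (P : Measure Ω) [IsFiniteMeasure P] {t : Set Ω}
    (ht : MeasurableSet t) (hPt : P.real t ≠ 0) {X Y : Ω → ℝ} (hX : IsBin X) (hY : IsBin Y) :
    covCond P X Y t = covNumerator (fun s => P.real (s ∩ t)) (ev X 1) (ev Y 1) / P.real t ^ 2 := by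
  have := cond_isProbabilityMeasure ((measureReal_ne_zero_iff).mp hPt)
  have hcov : covCond P X Y t = cov[(ev X 1).indicator 1, (ev Y 1).indicator 1; P[|t]] := by
    rw [← hX.eq_indicator, ← hY.eq_indicator]
    rfl
  rw [hcov, covariance_indicator_one _ (hX.measurableSet_ev 1) (hY.measurableSet_ev 1)]
  simp only [measureReal_cond P ht, covNumerator, univ_inter]
  field_simp

lemma measureReal_inter_eq_mul_of_le (μ : Measure Ω) [IsProbabilityMeasure μ] {X Y : Ω → ℝ}
    (hX : IsBin X) (hY : IsBin Y)
    (h : ∀ x y : ℝ, (x = 0 ∨ x = 1) → (y = 0 ∨ y = 1) →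
      μ.real (ev X x ∩ ev Y y) ≤ μ.real (ev X x) * μ.real (ev Y y)) :
    μ.real (ev X 1 ∩ ev Y 1) = μ.real (ev X 1) * μ.real (ev Y 1) := by
  have hX₀ := hY.measureReal_eq_add μ (ev X 0)
  have hX₁ := hY.measureReal_eq_add μ (ev X 1)
  have hXY := hX.measureReal_eq_add μ univ
  have hY' := hY.measureReal_eq_add μ univ
  simp only [probReal_univ, univ_inter] at hXY hY'
  have h₀₀ := h 0 0 (.inl rfl) (.inl rfl)
  have h₀₁ := h 0 1 (.inl rfl) (.inr rfl)
  have h₁₀ := h 1 0 (.inr rfl) (.inl rfl)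
  have h₁₁ := h 1 1 (.inr rfl) (.inr rfl)
  have hprod : (μ.real (ev X 0) + μ.real (ev X 1)) * (μ.real (ev Y 0) + μ.real (ev Y 1)) = 1 := by
    rw [← hXY, ← hY', one_mul]
  linarith

def IsYFactorization (P : Measure Ω) (X Y C D : Ω → ℝ) : Prop :=
  ∀ x y γ d : ℝ, (x = 0 ∨ x = 1) → (y = 0 ∨ y = 1) → (γ = 0 ∨ γ = 1) → (d = 0 ∨ d = 1) →
    P.real (ev X x ∩ ev Y y ∩ ev C γ ∩ ev D d) =
      P.real (ev X x) * P.real (ev Y y) * cpr P (ev C γ) (ev X x ∩ ev Y y) *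
        cpr P (ev D d) (ev C γ)

namespace IsYFactorization

variable {P : Measure Ω} {X Y C D : Ω → ℝ} {x y γ d : ℝ}

lemma measureReal_cell_inter [IsFiniteMeasure P] (hP : IsYFactorization P X Y C D) (hD : IsBin D)
    (hx : x = 0 ∨ x = 1) (hy : y = 0 ∨ y = 1) (hγ : γ = 0 ∨ γ = 1)
    (hCγ : P.real (ev C γ) ≠ 0) :
    P.real (ev X x ∩ ev Y y ∩ ev C γ) =
      P.real (ev X x) * P.real (ev Y y) * cpr P (ev C γ) (ev X x ∩ ev Y y) := by
  rw [hD.measureReal_eq_add P, hP x y γ 0 hx hy hγ (.inl rfl), hP x y γ 1 hx hy hγ (.inr rfl)]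
  linear_combination (P.real (ev X x) * P.real (ev Y y) * cpr P (ev C γ) (ev X x ∩ ev Y y)) *
    hD.cpr_ev_zero_add_cpr_ev_one P hCγ

lemma measureReal_cell_inter_inter [IsFiniteMeasure P] (hP : IsYFactorization P X Y C D)
    (hD : IsBin D) (hx : x = 0 ∨ x = 1) (hy : y = 0 ∨ y = 1) (hγ : γ = 0 ∨ γ = 1)
    (hd : d = 0 ∨ d = 1) (hCγ : P.real (ev C γ) ≠ 0) :
    P.real (ev X x ∩ ev Y y ∩ ev C γ ∩ ev D d) =
      P.real (ev X x ∩ ev Y y ∩ ev C γ) * cpr P (ev D d) (ev C γ) := by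
  rw [hP x y γ d hx hy hγ hd, hP.measureReal_cell_inter hD hx hy hγ hCγ]

/- Only `≤`: conditioning on a null cell gives the zero measure, so there the conditional
probabilities of `C` sum to `0` rather than `1`. -/
lemma measureReal_cell_le [IsFiniteMeasure P] (hP : IsYFactorization P X Y C D) (hC : IsBin C)
    (hD : IsBin D) (hC₀ : P.real (ev C 0) ≠ 0) (hC₁ : P.real (ev C 1) ≠ 0)
    (hx : x = 0 ∨ x = 1) (hy : y = 0 ∨ y = 1) :
    P.real (ev X x ∩ ev Y y) ≤ P.real (ev X x) * P.real (ev Y y) := by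
  have hcond : cpr P (ev C 0) (ev X x ∩ ev Y y) + cpr P (ev C 1) (ev X x ∩ ev Y y) ≤ 1 := by
    have h := (measureReal_le_one : P[|ev X x ∩ ev Y y].real univ ≤ 1)
    rwa [hC.measureReal_eq_add _ univ, univ_inter, univ_inter] at h
  rw [hC.measureReal_eq_add P, hP.measureReal_cell_inter hD hx hy (.inl rfl) hC₀,
    hP.measureReal_cell_inter hD hx hy (.inr rfl) hC₁]
  have hprod : 0 ≤ P.real (ev X x) * P.real (ev Y y) := by positivity
  linarith [mul_le_mul_of_nonneg_left hcond hprod]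

lemma measureReal_ev_one_inter_ev_one [IsProbabilityMeasure P]
    (hP : IsYFactorization P X Y C D) (hX : IsBin X) (hY : IsBin Y) (hC : IsBin C) (hD : IsBin D)
    (hC₀ : P.real (ev C 0) ≠ 0) (hC₁ : P.real (ev C 1) ≠ 0) :
    P.real (ev X 1 ∩ ev Y 1) = P.real (ev X 1) * P.real (ev Y 1) :=
  measureReal_inter_eq_mul_of_le P hX hY fun _ _ => hP.measureReal_cell_le hC hD hC₀ hC₁

lemma measureReal_inter_inter_ev_eq_mul [IsFiniteMeasure P] (hP : IsYFactorization P X Y C D)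
    (hX : IsBin X) (hY : IsBin Y) (hC : IsBin C) (hD : IsBin D)
    (hC₀ : P.real (ev C 0) ≠ 0) (hC₁ : P.real (ev C 1) ≠ 0) (hγ : γ = 0 ∨ γ = 1)
    (hd : d = 0 ∨ d = 1) {s : Set Ω}
    (hs : s ∈ ({ev X 1 ∩ ev Y 1, ev X 1, ev Y 1, univ} : Set (Set Ω))) :
    P.real (s ∩ ev C γ ∩ ev D d) = P.real (s ∩ ev C γ) * cpr P (ev D d) (ev C γ) := by
  have hCγ : P.real (ev C γ) ≠ 0 := by rcases hγ with rfl | rfl <;> assumption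
  have hcell {x y : ℝ} (hx : x = 0 ∨ x = 1) (hy : y = 0 ∨ y = 1) :=
    hP.measureReal_cell_inter_inter hD hx hy hγ hd hCγ
  simp only [mem_insert_iff, mem_singleton_iff] at hs
  rcases hs with rfl | rfl | rfl | rfl
  · exact hcell (.inr rfl) (.inr rfl)
  · exact hY.measureReal_inter_inter_eq_mul P fun _ hy => hcell (.inr rfl) hy
  · refine hX.measureReal_inter_inter_eq_mul P fun _ hx => ?_
    rw [inter_comm (ev Y 1)]
    exact hcell hx (.inr rfl)
  · simp only [univ_inter]
    rw [cpr_eq_div P (hC.measurableSet_ev γ), inter_comm (ev D d)]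
    field_simp

lemma measureReal_inter_ev_eq_mixture [IsFiniteMeasure P] (hP : IsYFactorization P X Y C D)
    (hX : IsBin X) (hY : IsBin Y) (hC : IsBin C) (hD : IsBin D)
    (hC₀ : P.real (ev C 0) ≠ 0) (hC₁ : P.real (ev C 1) ≠ 0) (hd : d = 0 ∨ d = 1) {s : Set Ω}
    (hs : s ∈ ({ev X 1 ∩ ev Y 1, ev X 1, ev Y 1, univ} : Set (Set Ω))) :
    P.real (s ∩ ev D d) = cpr P (ev D d) (ev C 1) * P.real (s ∩ ev C 1) +
      cpr P (ev D d) (ev C 0) * P.real (s ∩ ev C 0) := by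
  rw [hC.measureReal_inter_eq_add P s,
    hP.measureReal_inter_inter_ev_eq_mul hX hY hC hD hC₀ hC₁ (.inl rfl) hd hs,
    hP.measureReal_inter_inter_ev_eq_mul hX hY hC hD hC₀ hC₁ (.inr rfl) hd hs]
  ring

end IsYFactorization

theorem Y_bias_cov_eq_combination_of_embedded_V_bias_general (P : Measure Ω) [IsProbabilityMeasure P]
    (X Y C D : Ω → ℝ) (hX : IsBin X) (hY : IsBin Y) (hC : IsBin C) (hD : IsBin D)
    (hfact : ∀ x y γ d : ℝ, (x = 0 ∨ x = 1) → (y = 0 ∨ y = 1) → (γ = 0 ∨ γ = 1) →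
      (d = 0 ∨ d = 1) →
      pr P (ev X x ∩ ev Y y ∩ ev C γ ∩ ev D d) =
        pr P (ev X x) * pr P (ev Y y) * cpr P (ev C γ) (ev X x ∩ ev Y y) *
          cpr P (ev D d) (ev C γ))
    (hC1 : 0 < pr P (ev C 1)) (hC0 : 0 < pr P (ev C 0))
    (d : ℝ) (hd : d = 0 ∨ d = 1) (hDd : 0 < pr P (ev D d)) :
    covCond P X Y (ev D d) =
      (cpr P (ev D d) (ev C 1) - cpr P (ev D d) (ev C 0)) / (pr P (ev D d)) ^ 2 *
        (cpr P (ev D d) (ev C 1) * (pr P (ev C 1)) ^ 2 * covCond P X Y (ev C 1) -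
          cpr P (ev D d) (ev C 0) * (pr P (ev C 0)) ^ 2 * covCond P X Y (ev C 0)) := by
  have hP : IsYFactorization P X Y C D := hfact
  have hC₀ : P.real (ev C 0) ≠ 0 := hC0.ne'
  have hC₁ : P.real (ev C 1) ≠ 0 := hC1.ne'
  have hnum := covNumerator_mixture
    (fun s hs => hP.measureReal_inter_ev_eq_mixture hX hY hC hD hC₀ hC₁ hd hs)
    (hC.measureReal_eq_add P)
    (by simp [covNumerator, hP.measureReal_ev_one_inter_ev_one hX hY hC hD hC₀ hC₁])
  simp only [pr_eq_measureReal] at hDd ⊢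
  rw [covCond_eq_covNumerator_div P (hD.measurableSet_ev d) hDd.ne' hX hY,
    covCond_eq_covNumerator_div P (hC.measurableSet_ev 1) hC₁ hX hY,
    covCond_eq_covNumerator_div P (hC.measurableSet_ev 0) hC₀ hX hY, hnum]
  field_simp

/-- Y-bias on the covariance scale is a linear combination of the embedded V-biases. -/
theorem Y_bias_cov_eq_combination_of_embedded_V_bias (P : Measure Ω) [IsProbabilityMeasure P]
    (X Y C D : Ω → ℝ) (hX : IsBin X) (hY : IsBin Y) (hC : IsBin C) (hD : IsBin D)
    (hX1 : 0 < pr P (ev X 1)) (hX1' : pr P (ev X 1) < 1)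
    (hY1 : 0 < pr P (ev Y 1)) (hY1' : pr P (ev Y 1) < 1)
    (hfact : ∀ x y γ d : ℝ, (x = 0 ∨ x = 1) → (y = 0 ∨ y = 1) → (γ = 0 ∨ γ = 1) →
      (d = 0 ∨ d = 1) →
      pr P (ev X x ∩ ev Y y ∩ ev C γ ∩ ev D d) =
        pr P (ev X x) * pr P (ev Y y) * cpr P (ev C γ) (ev X x ∩ ev Y y) *
          cpr P (ev D d) (ev C γ))
    (hC1 : 0 < pr P (ev C 1)) (hC0 : 0 < pr P (ev C 0))
    (d : ℝ) (hd : d = 0 ∨ d = 1) (hDd : 0 < pr P (ev D d)) :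
    covCond P X Y (ev D d) =
      (cpr P (ev D d) (ev C 1) - cpr P (ev D d) (ev C 0)) / (pr P (ev D d)) ^ 2 *
        (cpr P (ev D d) (ev C 1) * (pr P (ev C 1)) ^ 2 * covCond P X Y (ev C 1) -
          cpr P (ev D d) (ev C 0) * (pr P (ev C 0)) ^ 2 * covCond P X Y (ev C 0)) :=
  Y_bias_cov_eq_combination_of_embedded_V_bias_general P X Y C D hX hY hC hD hfact hC1 hC0 d hd hDd
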